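/- Let 0 ≤ q ≤ 1 and m, n positive integers with n ≥ 2. Let M₁ have binomial distribution Bin(m,q) and let M₂ have Poisson distribution Po(m·q). Then the total variation distance between the distribution of G*(M₁) and the distribution of the Erdős–Rényi random graph G(n, 1 − exp(−m·q/binom(n,2))) equals the total variation distance between the distributions of G*(M₁) and G*(M₂), and is at most 2·d_TV(M₁, M₂), which is at most 2q. -/

import Mathlib

open scoped Classical
open Filter

noncomputable section

/-- The probability that `t` independent uniform samples (with repetition) from the
2-element subsets of `Fin n` yield exactly the graph `G`, where a pair is an edge iff
it is sampled at least once: the distribution of `G*(t)` for a deterministic `t`. -/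
def gstarGiven (n t : ℕ) (G : SimpleGraph (Fin n)) : ℝ :=
  (∑ f : Fin t → {e : Sym2 (Fin n) // ¬ e.IsDiag},
    if SimpleGraph.fromEdgeSet (Set.range (fun i => (f i : Sym2 (Fin n)))) = G
    then 1 else 0)
   / (Fintype.card {e : Sym2 (Fin n) // ¬ e.IsDiag} : ℝ) ^ t

/-- The distribution of the random graph `G*(M)`, where the number of samples is random
with probability mass function `M : ℕ → ℝ`. -/
def gstarDist (n : ℕ) (M : ℕ → ℝ) (G : SimpleGraph (Fin n)) : ℝ :=
  ∑' t, M t * gstarGiven n t G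

/-- The probability of the graph `G` under the Erdős–Rényi model `G(n, q)`, in which
each of the `n.choose 2` possible edges appears independently with probability `q`. -/
def erDist (n : ℕ) (q : ℝ) (G : SimpleGraph (Fin n)) : ℝ :=
  q ^ G.edgeSet.ncard * (1 - q) ^ (n.choose 2 - G.edgeSet.ncard)

/-- The binomial probability mass function `Bin(m, q)`. -/
def binomPmf (m : ℕ) (q : ℝ) (t : ℕ) : ℝ := (m.choose t : ℝ) * q ^ t * (1 - q) ^ (m - t)

/-- The Poisson probability mass function with mean `l`. -/
def poissonPmf (l : ℝ) (t : ℕ) : ℝ := Real.exp (-l) * l ^ t / (t.factorial : ℝ)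

/-- Total variation distance between two distributions on graphs on `Fin n`. -/
def graphTV {n : ℕ} (μ ν : SimpleGraph (Fin n) → ℝ) : ℝ :=
  ⨆ A : Set (SimpleGraph (Fin n)),
    |(∑ G : SimpleGraph (Fin n), if G ∈ A then μ G else 0) -
     (∑ G : SimpleGraph (Fin n), if G ∈ A then ν G else 0)|

/-- Total variation distance between two distributions on `ℕ`. -/
def natTV (μ ν : ℕ → ℝ) : ℝ :=
  ⨆ s : Set ℕ,
    |(∑' t : ℕ, if t ∈ s then μ t else 0) - (∑' t : ℕ, if t ∈ s then ν t else 0)|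

/-!
With `Po(λ)` samples the multiplicities of the `N = C(n, 2)` pairs are independent `Po(λ / N)`,
so `G*(Po(λ))` is exactly `G(n, 1 - exp(-λ / N))` and the first claim is a rewrite. Concretely:
the sample sequences whose pairs all lie in a set `r` number `|r| ^ t`, so summing the law of
`G*(Po(λ))` over the subgraphs of `r` gives `exp(-λ) exp(λ |r| / N)`, and inversion over the
subset lattice identifies both laws.

Mixing the same kernel `t ↦ G*(t)` against two laws of `t` moves probabilities of events by at
most the `ℓ¹` distance of those laws, i.e. at most `2 d_TV`.

Finally `d_TV(Bin(m, q), Po(mq)) ≤ q` is the Stein–Chen bound: the solution `g` of the Stein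
equation `λ g(k+1) - k g(k) = 1_s(k) - Po(s)` has increments of size at most `1 / λ`, and Stein's
identity for the binomial turns `Bin(s) - Po(s)` into `λ q E[g(W + 2) - g(W + 1)]` with
`W ~ Bin(m - 1, q)`.
-/

open Finset Real

lemma Set.indicator_eq_indicator_one_mul {ι M₀ : Type*} [MulZeroOneClass M₀] (s : Set ι)
    (f : ι → M₀) (i : ι) : s.indicator f i = s.indicator 1 i * f i := by
  simpa using Set.indicator_mul_left s 1 f (i := i)

lemma Summable.mul_of_abs_le_one {ι : Type*} {μ c : ι → ℝ} (hμ : Summable μ)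
    (hc : ∀ t, |c t| ≤ 1) :
    Summable fun t => μ t * c t :=
  Summable.of_norm_bounded hμ.abs fun t => by
    rw [Real.norm_eq_abs, abs_mul]
    exact mul_le_of_le_one_right (abs_nonneg _) (hc t)

lemma Finset.eq_of_sum_powerset_eq {α M : Type*} [AddCommGroup M] {f g : Finset α → M}
    (h : ∀ r : Finset α, ∑ u ∈ r.powerset, f u = ∑ u ∈ r.powerset, g u) (r : Finset α) :
    f r = g r := by
  induction r using Finset.strongInduction with
  | H r ih =>
    have hr := h r
    rw [← add_sum_erase _ _ (mem_powerset_self r), ← add_sum_erase _ _ (mem_powerset_self r),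
      sum_congr rfl fun u hu => ih u ?_] at hr
    · exact add_right_cancel hr
    · exact ssubset_of_subset_of_ne (mem_powerset.1 (mem_of_mem_erase hu)) (ne_of_mem_erase hu)

lemma exp_neg_mul_mul_exp_sub_one_pow (x : ℝ) {k N : ℕ} (hk : k ≤ N) :
    exp (-(x * N)) * (exp x - 1) ^ k = (1 - exp (-x)) ^ k * exp (-x) ^ (N - k) := by
  have hsplit : exp (-(x * N)) = exp (-x) ^ k * exp (-x) ^ (N - k) := by
    rw [← pow_add, Nat.add_sub_cancel' hk, ← Real.exp_nat_mul]
    ring_nf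
  have hone : exp (-x) * (exp x - 1) = 1 - exp (-x) := by
    rw [mul_sub, ← Real.exp_add, neg_add_cancel, Real.exp_zero, mul_one]
  rw [hsplit, ← hone, mul_pow]
  ring

section Poisson

lemma poissonPmf_nonneg {l : ℝ} (hl : 0 ≤ l) (t : ℕ) : 0 ≤ poissonPmf l t := by
  unfold poissonPmf; positivity

lemma poissonPmf_pos {l : ℝ} (hl : 0 < l) (t : ℕ) : 0 < poissonPmf l t := by
  unfold poissonPmf; positivity

lemma hasSum_poissonPmf_mul_pow (l y : ℝ) :
    HasSum (fun t => poissonPmf l t * y ^ t) (exp (-l) * exp (l * y)) := by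
  have h := (NormedSpace.expSeries_div_hasSum_exp (l * y)).mul_left (exp (-l))
  rw [← Real.exp_eq_exp_ℝ] at h
  have hf : (fun t => poissonPmf l t * y ^ t)
      = fun t => exp (-l) * ((l * y) ^ t / t.factorial) := by
    funext t
    unfold poissonPmf
    ring
  rwa [hf]

lemma hasSum_poissonPmf (l : ℝ) : HasSum (poissonPmf l) 1 := by
  simpa [← Real.exp_add] using hasSum_poissonPmf_mul_pow l 1

lemma summable_poissonPmf (l : ℝ) : Summable (poissonPmf l) := (hasSum_poissonPmf l).summable

lemma succ_mul_poissonPmf_succ (l : ℝ) (t : ℕ) :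
    ((t : ℝ) + 1) * poissonPmf l (t + 1) = l * poissonPmf l t := by
  simp only [poissonPmf, Nat.factorial_succ, Nat.cast_mul, pow_succ]
  field_simp
  push_cast
  ring

end Poisson

section Binomial

variable {m : ℕ} {q : ℝ}

lemma binomPmf_nonneg (h0 : 0 ≤ q) (h1 : q ≤ 1) (t : ℕ) : 0 ≤ binomPmf m q t := by
  have : 0 ≤ 1 - q := by linarith
  unfold binomPmf; positivity

lemma binomPmf_eq_zero_of_lt {t : ℕ} (h : m < t) : binomPmf m q t = 0 := by
  simp [binomPmf, Nat.choose_eq_zero_of_lt h]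

lemma summable_binomPmf (m : ℕ) (q : ℝ) : Summable (binomPmf m q) :=
  summable_of_ne_finset_zero (s := range (m + 1)) fun _ ht =>
    binomPmf_eq_zero_of_lt (by simpa using ht)

lemma sum_range_binomPmf (m : ℕ) (q : ℝ) : ∑ t ∈ range (m + 1), binomPmf m q t = 1 := by
  have h := (add_pow q (1 - q) m).symm
  rw [add_sub_cancel, one_pow] at h
  rw [← h]
  exact sum_congr rfl fun t _ => by unfold binomPmf; ring

lemma tsum_binomPmf_eq_sum (f : ℕ → ℝ) :
    ∑' t, binomPmf m q t * f t = ∑ t ∈ range (m + 1), binomPmf m q t * f t :=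
  tsum_eq_sum fun t ht => by
    rw [binomPmf_eq_zero_of_lt (by simpa using ht), zero_mul]

lemma binomPmf_eq_poissonPmf_of_mul_eq_zero (h : (m : ℝ) * q = 0) :
    binomPmf m q = poissonPmf (m * q) := by
  funext t
  rcases mul_eq_zero.1 h with hm | hq
  · obtain rfl : m = 0 := by exact_mod_cast hm
    cases t <;> simp [binomPmf, poissonPmf]
  · subst hq
    cases t <;> simp [binomPmf, poissonPmf]

lemma succ_mul_binomPmf_succ (m : ℕ) (q : ℝ) (t : ℕ) :
    ((t : ℝ) + 1) * binomPmf (m + 1) q (t + 1) = ((m : ℝ) + 1) * q * binomPmf m q t := by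
  have hch : ((m + 1).choose (t + 1) : ℝ) * ((t : ℝ) + 1) = ((m : ℝ) + 1) * m.choose t := by
    exact_mod_cast (Nat.add_one_mul_choose_eq m t).symm
  simp only [binomPmf, Nat.add_sub_add_right, pow_succ]
  linear_combination q ^ t * q * (1 - q) ^ (m - t) * hch

lemma binomPmf_succ_succ (m : ℕ) (q : ℝ) (t : ℕ) :
    binomPmf (m + 1) q (t + 1) = (1 - q) * binomPmf m q (t + 1) + q * binomPmf m q t := by
  simp only [binomPmf, Nat.choose_succ_succ, Nat.cast_add, Nat.add_sub_add_right]
  rcases le_or_gt (t + 1) m with h | h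
  · rw [show m - t = m - (t + 1) + 1 by omega]
    ring
  · rw [Nat.choose_eq_zero_of_lt h]
    ring

lemma binomPmf_succ_zero (m : ℕ) (q : ℝ) : binomPmf (m + 1) q 0 = (1 - q) * binomPmf m q 0 := by
  simp [binomPmf, pow_succ]
  ring

end Binomial

section Poissonization

variable {n : ℕ}

abbrev NonDiagSym2 (n : ℕ) := {e : Sym2 (Fin n) // ¬ e.IsDiag}

def graphOfPairs (r : Finset (NonDiagSym2 n)) : SimpleGraph (Fin n) :=
  SimpleGraph.fromEdgeSet (Subtype.val '' (r : Set (NonDiagSym2 n)))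

lemma edgeSet_graphOfPairs (r : Finset (NonDiagSym2 n)) :
    (graphOfPairs r).edgeSet = Subtype.val '' (r : Set (NonDiagSym2 n)) := by
  rw [graphOfPairs, SimpleGraph.edgeSet_fromEdgeSet, sdiff_eq_left]
  exact Set.disjoint_left.2 fun _ ⟨e, _, he⟩ hd => e.2 (he ▸ hd)

lemma graphOfPairs_injective : Function.Injective (graphOfPairs (n := n)) := fun r r' h => by
  have h' := congrArg SimpleGraph.edgeSet h
  rw [edgeSet_graphOfPairs, edgeSet_graphOfPairs] at h'
  exact coe_injective (Set.image_injective.2 Subtype.val_injective h')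

lemma graphOfPairs_surjective : Function.Surjective (graphOfPairs (n := n)) := fun G => by
  refine ⟨({e | e.1 ∈ G.edgeSet} : Finset (NonDiagSym2 n)), SimpleGraph.edgeSet_inj.1 ?_⟩
  ext e
  simpa [edgeSet_graphOfPairs] using fun he => G.not_isDiag_of_mem_edgeSet he

lemma ncard_edgeSet_graphOfPairs (r : Finset (NonDiagSym2 n)) :
    (graphOfPairs r).edgeSet.ncard = #r := by
  rw [edgeSet_graphOfPairs, Set.ncard_image_of_injective _ Subtype.val_injective,
    Set.ncard_coe_finset]

def exactCoverCount (r : Finset (NonDiagSym2 n)) (t : ℕ) : ℕ :=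
  #{f : Fin t → NonDiagSym2 n | image f univ = r}

lemma exactCoverCount_le (r : Finset (NonDiagSym2 n)) (t : ℕ) :
    exactCoverCount r t ≤ Fintype.card (NonDiagSym2 n) ^ t :=
  (card_filter_le _ _).trans_eq (by simp)

lemma gstarGiven_graphOfPairs (t : ℕ) (r : Finset (NonDiagSym2 n)) :
    gstarGiven n t (graphOfPairs r)
      = exactCoverCount r t / (Fintype.card (NonDiagSym2 n) : ℝ) ^ t := by
  have hrange (f : Fin t → NonDiagSym2 n) :
      SimpleGraph.fromEdgeSet (Set.range fun i => (f i : Sym2 (Fin n)))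
        = graphOfPairs (image f univ) := by
    rw [graphOfPairs, coe_image, coe_univ, Set.image_univ, ← Set.range_comp]
    rfl
  simp only [gstarGiven, hrange, graphOfPairs_injective.eq_iff, sum_boole, exactCoverCount]

lemma sum_powerset_exactCoverCount (r : Finset (NonDiagSym2 n)) (t : ℕ) :
    ∑ u ∈ r.powerset, exactCoverCount u t = #r ^ t := by
  have hsub : #{f : Fin t → NonDiagSym2 n | image f univ ⊆ r} = #r ^ t := by
    have : ({f | image f univ ⊆ r} : Finset (Fin t → NonDiagSym2 n))
        = Fintype.piFinset fun _ => r := by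
      ext f
      simp [Fintype.mem_piFinset, image_subset_iff]
    rw [this, Fintype.card_piFinset, prod_const, card_univ, Fintype.card_fin]
  rw [← hsub, card_eq_sum_card_fiberwise (f := fun f => image f univ) (t := r.powerset)
    fun f hf => by simpa only [coe_filter, mem_univ, true_and, Set.mem_ofPred_eq, mem_coe,
      mem_powerset] using hf]
  refine sum_congr rfl fun u hu => ?_
  rw [exactCoverCount, filter_filter]
  congr 1
  ext f
  simp only [mem_filter, mem_univ, true_and]
  exact ⟨fun h => ⟨h ▸ mem_powerset.1 hu, h⟩, And.right⟩

lemma sum_powerset_gstarDist_poissonPmf (l : ℝ) (r : Finset (NonDiagSym2 n)) :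
    ∑ u ∈ r.powerset, gstarDist n (poissonPmf l) (graphOfPairs u)
      = exp (-l) * exp (l * (#r / (Fintype.card (NonDiagSym2 n) : ℝ))) := by
  set N := (Fintype.card (NonDiagSym2 n) : ℝ)
  have hcount (u : Finset (NonDiagSym2 n)) (t : ℕ) :
      |(exactCoverCount u t : ℝ) / N ^ t| ≤ 1 := by
    rw [abs_of_nonneg (by positivity)]
    refine div_le_one_of_le₀ ?_ (by positivity)
    simp only [N]
    exact_mod_cast exactCoverCount_le u t
  simp only [gstarDist, gstarGiven_graphOfPairs]
  rw [← Summable.tsum_finsetSum fun u _ => (summable_poissonPmf l).mul_of_abs_le_one (hcount u),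
    ← (hasSum_poissonPmf_mul_pow l _).tsum_eq]
  refine tsum_congr fun t => ?_
  rw [← mul_sum, ← sum_div, ← Nat.cast_sum, sum_powerset_exactCoverCount, div_pow]
  push_cast
  rfl

lemma gstarDist_poissonPmf_graphOfPairs (l : ℝ) (r : Finset (NonDiagSym2 n)) :
    gstarDist n (poissonPmf l) (graphOfPairs r)
      = exp (-l) * (exp (l / Fintype.card (NonDiagSym2 n)) - 1) ^ #r := by
  refine Finset.eq_of_sum_powerset_eq (f := fun u => gstarDist n (poissonPmf l) (graphOfPairs u))
    (g := fun u => exp (-l) * (exp (l / Fintype.card (NonDiagSym2 n)) - 1) ^ #u) (fun r => ?_) r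
  have h := sum_pow_mul_eq_add_pow (exp (l / Fintype.card (NonDiagSym2 n)) - 1) 1 r
  simp only [one_pow, mul_one, sub_add_cancel, ← Real.exp_nat_mul] at h
  rw [sum_powerset_gstarDist_poissonPmf, ← mul_sum, h]
  ring_nf

lemma gstarDist_poissonPmf (hn : 2 ≤ n) (l : ℝ) :
    gstarDist n (poissonPmf l) = erDist n (1 - exp (-(l / n.choose 2))) := by
  have hN : Fintype.card (NonDiagSym2 n) = n.choose 2 := by
    rw [Sym2.card_subtype_not_diag, Fintype.card_fin]
  have hN0 : (n.choose 2 : ℝ) ≠ 0 := by exact_mod_cast (Nat.choose_pos hn).ne'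
  funext G
  obtain ⟨r, rfl⟩ := graphOfPairs_surjective G
  rw [gstarDist_poissonPmf_graphOfPairs, erDist, ncard_edgeSet_graphOfPairs, sub_sub_cancel, hN,
    ← exp_neg_mul_mul_exp_sub_one_pow _ (hN ▸ card_le_univ r), div_mul_cancel₀ l hN0]

end Poissonization

section TotalVariation

variable {μ ν : ℕ → ℝ}

lemma abs_tsum_indicator_sub_le_natTV (hμ : Summable μ) (hν : Summable ν) (s : Set ℕ) :
    |∑' t, s.indicator μ t - ∑' t, s.indicator ν t| ≤ natTV μ ν := by
  have hbdd : BddAbove (Set.range fun s : Set ℕ =>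
      |(∑' t, if t ∈ s then μ t else 0) - (∑' t, if t ∈ s then ν t else 0)|) := by
    refine ⟨∑' t, |μ t - ν t|, ?_⟩
    rintro _ ⟨s, rfl⟩
    simp only [← Set.indicator_apply]
    rw [← Summable.tsum_sub (hμ.indicator s) (hν.indicator s), ← Real.norm_eq_abs]
    refine tsum_of_norm_bounded (hμ.sub hν).abs.hasSum fun t => ?_
    by_cases h : t ∈ s <;> simp [h]
  simp only [natTV, Set.indicator_apply]
  exact le_ciSup hbdd s

lemma tsum_abs_sub_le_two_mul_natTV (hμ : Summable μ) (hν : Summable ν) :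
    ∑' t, |μ t - ν t| ≤ 2 * natTV μ ν := by
  set s := {t | ν t ≤ μ t}
  have hsplit (t : ℕ) : |μ t - ν t| = (s.indicator μ t - s.indicator ν t)
      + (sᶜ.indicator ν t - sᶜ.indicator μ t) := by
    by_cases h : ν t ≤ μ t
    · simp [s, h, abs_of_nonneg]
    · rw [abs_sub_comm, abs_of_pos (sub_pos.2 (not_le.1 h))]
      simp [s, h]
  have hs := abs_tsum_indicator_sub_le_natTV hμ hν s
  have hsc := abs_tsum_indicator_sub_le_natTV hμ hν sᶜ
  rw [tsum_congr hsplit, Summable.tsum_add ((hμ.indicator s).sub (hν.indicator s))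
      ((hν.indicator sᶜ).sub (hμ.indicator sᶜ)),
    Summable.tsum_sub (hμ.indicator s) (hν.indicator s),
    Summable.tsum_sub (hν.indicator sᶜ) (hμ.indicator sᶜ)]
  linarith [le_abs_self (∑' t, s.indicator μ t - ∑' t, s.indicator ν t),
    neg_abs_le (∑' t, sᶜ.indicator μ t - ∑' t, sᶜ.indicator ν t)]

lemma abs_tsum_mul_sub_tsum_mul_le {c : ℕ → ℝ} (hμ : Summable μ) (hν : Summable ν)
    (hc0 : ∀ t, 0 ≤ c t) (hc1 : ∀ t, c t ≤ 1) :
    |∑' t, μ t * c t - ∑' t, ν t * c t| ≤ 2 * natTV μ ν := by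
  have hc t : |c t| ≤ 1 := abs_le.2 ⟨by linarith [hc0 t], hc1 t⟩
  rw [← Summable.tsum_sub (hμ.mul_of_abs_le_one hc) (hν.mul_of_abs_le_one hc)]
  rw [← Real.norm_eq_abs]
  refine (tsum_of_norm_bounded (hμ.sub hν).abs.hasSum fun t => ?_).trans
    (tsum_abs_sub_le_two_mul_natTV hμ hν)
  rw [Real.norm_eq_abs, ← sub_mul, abs_mul]
  exact mul_le_of_le_one_right (abs_nonneg _) (hc t)

end TotalVariation

section GStar

variable {n : ℕ}

lemma gstarGiven_nonneg (t : ℕ) (G : SimpleGraph (Fin n)) : 0 ≤ gstarGiven n t G := by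
  unfold gstarGiven
  positivity

lemma sum_gstarGiven_le_one (t : ℕ) : ∑ G : SimpleGraph (Fin n), gstarGiven n t G ≤ 1 := by
  simp only [gstarGiven, ← sum_div]
  rw [sum_comm]
  simp only [sum_ite_eq, mem_univ, if_true, sum_const, card_univ, Fintype.card_fun,
    Fintype.card_fin, nsmul_eq_mul, mul_one, Nat.cast_pow]
  exact div_self_le_one _

lemma gstarGiven_le_one (t : ℕ) (G : SimpleGraph (Fin n)) : gstarGiven n t G ≤ 1 :=
  (single_le_sum (fun G _ => gstarGiven_nonneg t G) (mem_univ G)).trans (sum_gstarGiven_le_one t)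

lemma sum_ite_mem_gstarGiven_mem_Icc (t : ℕ) (A : Set (SimpleGraph (Fin n))) :
    ∑ G, (if G ∈ A then gstarGiven n t G else 0) ∈ Set.Icc (0 : ℝ) 1 :=
  ⟨sum_nonneg fun G _ => by split_ifs <;> simp [gstarGiven_nonneg],
    (sum_le_sum fun G _ => by split_ifs <;> simp [gstarGiven_nonneg]).trans
      (sum_gstarGiven_le_one t)⟩

lemma sum_ite_mem_gstarDist {μ : ℕ → ℝ} (hμ : Summable μ) (A : Set (SimpleGraph (Fin n))) :
    ∑ G, (if G ∈ A then gstarDist n μ G else 0)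
      = ∑' t, μ t * ∑ G, (if G ∈ A then gstarGiven n t G else 0) := by
  have hG (G : SimpleGraph (Fin n)) :
      (if G ∈ A then gstarDist n μ G else 0)
        = ∑' t, μ t * (if G ∈ A then gstarGiven n t G else 0) := by
    split_ifs <;> simp [gstarDist]
  have hsum (G : SimpleGraph (Fin n)) :
      Summable fun t => μ t * (if G ∈ A then gstarGiven n t G else 0) := by
    refine hμ.mul_of_abs_le_one fun t => ?_
    split_ifs
    · rw [abs_of_nonneg (gstarGiven_nonneg t G)]
      exact gstarGiven_le_one t G
    · simp
  simp only [hG, mul_sum]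
  exact (Summable.tsum_finsetSum fun G _ => hsum G).symm

lemma graphTV_gstarDist_le {μ ν : ℕ → ℝ} (hμ : Summable μ) (hν : Summable ν) :
    graphTV (gstarDist n μ) (gstarDist n ν) ≤ 2 * natTV μ ν :=
  ciSup_le fun A => by
    rw [sum_ite_mem_gstarDist hμ, sum_ite_mem_gstarDist hν]
    exact abs_tsum_mul_sub_tsum_mul_le hμ hν (fun t => (sum_ite_mem_gstarGiven_mem_Icc t A).1)
      (fun t => (sum_ite_mem_gstarGiven_mem_Icc t A).2)

end GStar

section Stein

variable (l : ℝ) (s : Set ℕ)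

def poissonMassLE (k : ℕ) : ℝ := ∑ j ∈ range (k + 1), s.indicator (poissonPmf l) j

def poissonMass : ℝ := ∑' j, s.indicator (poissonPmf l) j

/-- The covariance of the indicators of `s` and of `[0, k]` under `Po(l)`. -/
def poissonCov (k : ℕ) : ℝ := poissonMassLE l s k - poissonMass l s * poissonMassLE l Set.univ k

/-- The solution of the Stein equation `l g(k+1) - k g(k) = 1_s(k) - Po_l(s)` with `g 0 = 0`. -/
def poissonSteinSol : ℕ → ℝ
  | 0 => 0
  | k + 1 => poissonCov l s k / (l * poissonPmf l k)

variable {l}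

lemma poissonMassLE_succ (k : ℕ) :
    poissonMassLE l s (k + 1) = poissonMassLE l s k + s.indicator (poissonPmf l) (k + 1) :=
  sum_range_succ _ _

lemma poissonMassLE_nonneg (hl : 0 ≤ l) (k : ℕ) : 0 ≤ poissonMassLE l s k :=
  sum_nonneg fun j _ => Set.indicator_nonneg (fun j _ => poissonPmf_nonneg hl j) j

lemma poissonMassLE_le_poissonMass (hl : 0 ≤ l) (k : ℕ) :
    poissonMassLE l s k ≤ poissonMass l s :=
  Summable.sum_le_tsum _ (fun j _ => Set.indicator_nonneg (fun j _ => poissonPmf_nonneg hl j) j)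
    ((summable_poissonPmf l).indicator s)

lemma poissonCov_succ (k : ℕ) :
    poissonCov l s (k + 1) =
      poissonCov l s k + (s.indicator 1 (k + 1) - poissonMass l s) * poissonPmf l (k + 1) := by
  simp only [poissonCov, poissonMassLE_succ, Set.indicator_univ,
    Set.indicator_eq_indicator_one_mul s (poissonPmf l) (k + 1)]
  ring

lemma poissonCov_compl (k : ℕ) : poissonCov l sᶜ k = - poissonCov l s k := by
  have hF : poissonMassLE l s k + poissonMassLE l sᶜ k = poissonMassLE l Set.univ k := by
    simp only [poissonMassLE, ← sum_add_distrib, Set.indicator_self_add_compl_apply,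
      Set.indicator_univ]
  have hP : poissonMass l s + poissonMass l sᶜ = 1 := by
    rw [poissonMass, poissonMass, ← Summable.tsum_add ((summable_poissonPmf l).indicator s)
      ((summable_poissonPmf l).indicator sᶜ), tsum_congr (Set.indicator_self_add_compl_apply s _),
      (hasSum_poissonPmf l).tsum_eq]
  simp only [poissonCov]
  linear_combination hF - poissonMassLE l Set.univ k * hP

lemma poissonSteinSol_compl (k : ℕ) : poissonSteinSol l sᶜ k = - poissonSteinSol l s k := by
  cases k with
  | zero => simp [poissonSteinSol]
  | succ k => simp [poissonSteinSol, poissonCov_compl, neg_div]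

lemma poissonSteinSol_spec (hl : 0 < l) (k : ℕ) :
    l * poissonSteinSol l s (k + 1) - k * poissonSteinSol l s k
      = s.indicator 1 k - poissonMass l s := by
  have hπ := poissonPmf_pos hl
  cases k with
  | zero =>
    have h0 : poissonCov l s 0 = (s.indicator 1 0 - poissonMass l s) * poissonPmf l 0 := by
      simp only [poissonCov, poissonMassLE, zero_add, range_one, sum_singleton,
        Set.indicator_univ, Set.indicator_eq_indicator_one_mul s (poissonPmf l) 0]
      ring
    simp only [poissonSteinSol, h0]
    field_simp [(hπ 0).ne']
    ring
  | succ k =>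
    have hrec := succ_mul_poissonPmf_succ l k
    simp only [poissonSteinSol, poissonCov_succ, Nat.cast_succ, ← hrec]
    field_simp [(hπ (k + 1)).ne']
    ring

lemma one_sub_poissonMassLE_univ (k : ℕ) :
    1 - poissonMassLE l Set.univ k = ∑' j, poissonPmf l (j + (k + 1)) := by
  rw [← (hasSum_poissonPmf l).tsum_eq,
    ← (summable_poissonPmf l).sum_add_tsum_nat_add (k + 1)]
  simp [poissonMassLE]

lemma mul_poissonMassLE_univ_le (hl : 0 ≤ l) (k : ℕ) :
    l * poissonMassLE l Set.univ k ≤ ((k : ℝ) + 1) * poissonMassLE l Set.univ (k + 1) := by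
  simp only [poissonMassLE, Set.indicator_univ]
  calc l * ∑ j ∈ range (k + 1), poissonPmf l j
      = ∑ j ∈ range (k + 1), ((j : ℝ) + 1) * poissonPmf l (j + 1) := by
        rw [mul_sum]
        exact sum_congr rfl fun j _ => (succ_mul_poissonPmf_succ l j).symm
    _ ≤ ∑ j ∈ range (k + 1), ((k : ℝ) + 1) * poissonPmf l (j + 1) := by
        gcongr with j hj
        · exact poissonPmf_nonneg hl _
        · exact_mod_cast Nat.le_of_lt_succ (mem_range.1 hj)
    _ ≤ ((k : ℝ) + 1) * ∑ j ∈ range (k + 1 + 1), poissonPmf l j := by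
        rw [← mul_sum, sum_range_succ' _ (k + 1)]
        have := poissonPmf_nonneg hl 0
        gcongr
        linarith

lemma mul_one_sub_poissonMassLE_univ_le (hl : 0 ≤ l) (k : ℕ) :
    ((k : ℝ) + 1) * (1 - poissonMassLE l Set.univ (k + 1))
      ≤ l * (1 - poissonMassLE l Set.univ k) := by
  have hsum (a : ℕ) : Summable fun j => poissonPmf l (j + a) :=
    (summable_nat_add_iff a).2 (summable_poissonPmf l)
  rw [one_sub_poissonMassLE_univ, one_sub_poissonMassLE_univ, ← tsum_mul_left, ← tsum_mul_left]
  refine Summable.tsum_le_tsum (fun j => ?_) ((hsum _).mul_left _) ((hsum _).mul_left _)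
  rw [← succ_mul_poissonPmf_succ, show j + (k + 1) + 1 = j + (k + 1 + 1) by ring]
  gcongr
  · exact poissonPmf_nonneg hl _
  · linarith [(j.cast_nonneg : (0 : ℝ) ≤ j)]

/-- With `D = (k + 1) F(k + 1) - l F(k) ≥ 0`, where `F` is the distribution function of `Po(l)`,
the left side is `∑_{j ∈ s} π_j w_j` with `w_j = k + 1 - l - D ≤ 0` for `j ≤ k`,
`w_{k+1} = k + 1 - D` and `w_j = -D` for `j > k + 1`: only `j = k + 1` contributes positively. -/
lemma succ_mul_poissonCov_succ_sub_le (hl : 0 ≤ l) (k : ℕ) :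
    ((k : ℝ) + 1) * poissonCov l s (k + 1) - l * poissonCov l s k
      ≤ ((k : ℝ) + 1) * poissonPmf l (k + 1) := by
  have hD := sub_nonneg.2 (mul_poissonMassLE_univ_le hl k)
  have hP := mul_le_mul_of_nonneg_right (poissonMassLE_le_poissonMass s hl (k + 1)) hD
  have hlow := mul_le_mul_of_nonneg_left (mul_one_sub_poissonMassLE_univ_le hl k)
    (poissonMassLE_nonneg s hl k)
  have hi0 : 0 ≤ s.indicator (poissonPmf l) (k + 1) :=
    Set.indicator_nonneg (fun j _ => poissonPmf_nonneg hl j) _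
  have hi1 : s.indicator (poissonPmf l) (k + 1) ≤ poissonPmf l (k + 1) :=
    Set.indicator_le_self' (fun j _ => poissonPmf_nonneg hl j) _
  rw [poissonMassLE_succ s] at hP
  simp only [poissonCov, poissonMassLE_succ s]
  nlinarith [mul_nonneg hi0 hD, mul_le_mul_of_nonneg_left hi1 (by positivity : (0 : ℝ) ≤ k + 1)]

lemma poissonSteinSol_succ_succ_sub_le (hl : 0 < l) (k : ℕ) :
    poissonSteinSol l s (k + 2) - poissonSteinSol l s (k + 1) ≤ l⁻¹ := by
  have hπ := poissonPmf_pos hl (k + 1)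
  have hrec := succ_mul_poissonPmf_succ l k
  have hden : 0 < l * (((k : ℝ) + 1) * poissonPmf l (k + 1)) := by positivity
  have hdiff : poissonSteinSol l s (k + 2) - poissonSteinSol l s (k + 1)
      = (((k : ℝ) + 1) * poissonCov l s (k + 1) - l * poissonCov l s k)
        / (l * (((k : ℝ) + 1) * poissonPmf l (k + 1))) := by
    simp only [poissonSteinSol, ← hrec]
    field_simp
  rw [hdiff, div_le_iff₀ hden]
  calc _ ≤ ((k : ℝ) + 1) * poissonPmf l (k + 1) := succ_mul_poissonCov_succ_sub_le s hl.le k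
    _ = l⁻¹ * (l * (((k : ℝ) + 1) * poissonPmf l (k + 1))) := by field_simp

lemma abs_poissonSteinSol_succ_succ_sub_le (hl : 0 < l) (k : ℕ) :
    |poissonSteinSol l s (k + 2) - poissonSteinSol l s (k + 1)| ≤ l⁻¹ := by
  refine abs_le.2 ⟨?_, poissonSteinSol_succ_succ_sub_le s hl k⟩
  have := poissonSteinSol_succ_succ_sub_le sᶜ hl k
  rw [poissonSteinSol_compl, poissonSteinSol_compl] at this
  linarith

end Stein

section BinomialStein

variable {m : ℕ} {q : ℝ}

lemma sum_binomPmf_succ_mul_cast (g : ℕ → ℝ) :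
    ∑ t ∈ range (m + 2), binomPmf (m + 1) q t * (t * g t)
      = ((m : ℝ) + 1) * q * ∑ t ∈ range (m + 1), binomPmf m q t * g (t + 1) := by
  rw [sum_range_succ', mul_sum]
  simp only [Nat.cast_zero, zero_mul, mul_zero, add_zero]
  refine sum_congr rfl fun t _ => ?_
  rw [← mul_assoc, ← mul_assoc, ← succ_mul_binomPmf_succ]
  push_cast
  ring

lemma sum_binomPmf_succ (g : ℕ → ℝ) :
    ∑ t ∈ range (m + 2), binomPmf (m + 1) q t * g t
      = ∑ t ∈ range (m + 1), binomPmf m q t * ((1 - q) * g t + q * g (t + 1)) := by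
  have hlast : ∑ t ∈ range (m + 1), binomPmf m q t * g t
      = ∑ t ∈ range (m + 1), binomPmf m q (t + 1) * g (t + 1) + binomPmf m q 0 * g 0 := by
    rw [← sum_range_succ' (fun t => binomPmf m q t * g t), sum_range_succ _ (m + 1),
      binomPmf_eq_zero_of_lt (by omega), zero_mul, add_zero]
  have hsplit : ∑ t ∈ range (m + 1), binomPmf m q t * ((1 - q) * g t + q * g (t + 1))
      = (1 - q) * ∑ t ∈ range (m + 1), binomPmf m q t * g t
        + q * ∑ t ∈ range (m + 1), binomPmf m q t * g (t + 1) := by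
    rw [mul_sum, mul_sum, ← sum_add_distrib]
    exact sum_congr rfl fun t _ => by ring
  have hpascal : ∑ t ∈ range (m + 1), binomPmf (m + 1) q (t + 1) * g (t + 1)
      = (1 - q) * ∑ t ∈ range (m + 1), binomPmf m q (t + 1) * g (t + 1)
        + q * ∑ t ∈ range (m + 1), binomPmf m q t * g (t + 1) := by
    rw [mul_sum, mul_sum, ← sum_add_distrib]
    exact sum_congr rfl fun t _ => by rw [binomPmf_succ_succ]; ring
  rw [sum_range_succ', hpascal, binomPmf_succ_zero, hsplit, hlast]
  ring

lemma sum_binomPmf_stein (g : ℕ → ℝ) :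
    ∑ t ∈ range (m + 2), binomPmf (m + 1) q t * (((m : ℝ) + 1) * q * g (t + 1) - t * g t)
      = ((m : ℝ) + 1) * q * q
        * ∑ t ∈ range (m + 1), binomPmf m q t * (g (t + 2) - g (t + 1)) := by
  simp only [mul_sub, sum_sub_distrib, sum_binomPmf_succ_mul_cast, mul_left_comm _ (_ * q),
    ← mul_sum, sum_binomPmf_succ (g := fun t => g (t + 1))]
  simp only [mul_add, sum_add_distrib, mul_left_comm _ (1 - q),
    mul_left_comm _ q, ← mul_sum]
  ring

lemma tsum_indicator_binomPmf_sub_poissonMass (hq : 0 < q) (s : Set ℕ) :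
    ∑' t, s.indicator (binomPmf (m + 1) q) t - poissonMass (((m : ℝ) + 1) * q) s
      = ((m : ℝ) + 1) * q * q * ∑ t ∈ range (m + 1), binomPmf m q t
          * (poissonSteinSol (((m : ℝ) + 1) * q) s (t + 2)
            - poissonSteinSol (((m : ℝ) + 1) * q) s (t + 1)) := by
  rw [← sum_binomPmf_stein]
  calc _ = ∑ t ∈ range (m + 2), binomPmf (m + 1) q t
          * (s.indicator 1 t - poissonMass (((m : ℝ) + 1) * q) s) := by
        simp only [Set.indicator_eq_indicator_one_mul s (binomPmf _ q),
          mul_comm _ (binomPmf _ q _), tsum_binomPmf_eq_sum, mul_sub, sum_sub_distrib,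
          ← sum_mul, sum_range_binomPmf, one_mul]
    _ = _ := by simp only [poissonSteinSol_spec s (by positivity : 0 < ((m : ℝ) + 1) * q)]

lemma abs_tsum_indicator_binomPmf_sub_poissonMass_le (hq : 0 < q) (h1 : q ≤ 1) (s : Set ℕ) :
    |∑' t, s.indicator (binomPmf (m + 1) q) t - poissonMass (((m : ℝ) + 1) * q) s| ≤ q := by
  have hl : 0 < ((m : ℝ) + 1) * q := by positivity
  rw [tsum_indicator_binomPmf_sub_poissonMass hq]
  set l := ((m : ℝ) + 1) * q
  set g := poissonSteinSol l s
  have hsum : |∑ t ∈ range (m + 1), binomPmf m q t * (g (t + 2) - g (t + 1))| ≤ l⁻¹ :=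
    calc _ ≤ ∑ t ∈ range (m + 1), binomPmf m q t * l⁻¹ := by
          refine (abs_sum_le_sum_abs _ _).trans (sum_le_sum fun t _ => ?_)
          rw [abs_mul, abs_of_nonneg (binomPmf_nonneg hq.le h1 t)]
          exact mul_le_mul_of_nonneg_left (abs_poissonSteinSol_succ_succ_sub_le s hl t)
            (binomPmf_nonneg hq.le h1 t)
      _ = l⁻¹ := by rw [← sum_mul, sum_range_binomPmf, one_mul]
  rw [abs_mul, abs_of_pos (by positivity)]
  calc l * q * |_| ≤ l * q * l⁻¹ := by gcongr
    _ = q := by field_simp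

end BinomialStein

lemma natTV_self (μ : ℕ → ℝ) : natTV μ μ = 0 := by
  simp [natTV]

lemma natTV_binomPmf_poissonPmf_le (m : ℕ) {q : ℝ} (h0 : 0 ≤ q) (h1 : q ≤ 1) :
    natTV (binomPmf m q) (poissonPmf (m * q)) ≤ q := by
  by_cases hmq : (m : ℝ) * q = 0
  · rw [binomPmf_eq_poissonPmf_of_mul_eq_zero hmq, natTV_self]
    exact h0
  obtain ⟨a, rfl⟩ : ∃ a, m = a + 1 :=
    Nat.exists_eq_add_one.2 (Nat.pos_of_ne_zero (by rintro rfl; simp at hmq))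
  have hq : 0 < q := h0.lt_of_ne (by rintro rfl; simp at hmq)
  refine ciSup_le fun s => ?_
  simp only [← Set.indicator_apply]
  push_cast
  exact abs_tsum_indicator_binomPmf_sub_poissonMass_le hq h1 s

theorem gstar_binomial_poisson_tv_general (n m : ℕ) (hn : 2 ≤ n)
    (q : ℝ) (h0 : 0 ≤ q) (h1 : q ≤ 1) :
    graphTV (gstarDist n (binomPmf m q))
        (erDist n (1 - Real.exp (-((m : ℝ) * q / (n.choose 2 : ℝ)))))
      = graphTV (gstarDist n (binomPmf m q)) (gstarDist n (poissonPmf ((m : ℝ) * q))) ∧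
    graphTV (gstarDist n (binomPmf m q)) (gstarDist n (poissonPmf ((m : ℝ) * q)))
      ≤ 2 * natTV (binomPmf m q) (poissonPmf ((m : ℝ) * q)) ∧
    2 * natTV (binomPmf m q) (poissonPmf ((m : ℝ) * q)) ≤ 2 * q := by
  refine ⟨by rw [gstarDist_poissonPmf hn], ?_, ?_⟩
  · exact graphTV_gstarDist_le (summable_binomPmf m q) (summable_poissonPmf _)
  · linarith [natTV_binomPmf_poissonPmf_le m h0 h1]

/-- For `M₁ ~ Bin(m, q)` and `M₂ ~ Po(m q)`, the total variation distance between
`G*(M₁)` and `G(n, 1 - exp(-m q / C(n,2)))` equals the total variation distance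
between `G*(M₁)` and `G*(M₂)`, is at most `2 d_TV(M₁, M₂)`, and `2 d_TV(M₁, M₂) ≤ 2q`. -/
theorem gstar_binomial_poisson_tv (n m : ℕ) (hn : 2 ≤ n) (hm : 0 < m)
    (q : ℝ) (h0 : 0 ≤ q) (h1 : q ≤ 1) :
    graphTV (gstarDist n (binomPmf m q))
        (erDist n (1 - Real.exp (-((m : ℝ) * q / (n.choose 2 : ℝ)))))
      = graphTV (gstarDist n (binomPmf m q)) (gstarDist n (poissonPmf ((m : ℝ) * q))) ∧
    graphTV (gstarDist n (binomPmf m q)) (gstarDist n (poissonPmf ((m : ℝ) * q)))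
      ≤ 2 * natTV (binomPmf m q) (poissonPmf ((m : ℝ) * q)) ∧
    2 * natTV (binomPmf m q) (poissonPmf ((m : ℝ) * q)) ≤ 2 * q :=
  gstar_binomial_poisson_tv_general n m hn q h0 h1
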